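/- arXiv:2101.02790 — 2 statements merged into one kernel-verified Lean document; each statement's English description precedes it below -/
import Mathlib

section
/- (Gordon bound, case t = 1) If S is a PD-set for an [n,k,d] code C that can correct t = 1 error, and r = n − k, then |S| ≥ ⌈n/r⌉. -/
/-- Gordon bound, case `t = 1`: if `S` is a PD-set for an `[n,k,d]` code `C` correcting
`t = 1` error, and `r = n - k`, then `|S| ≥ ⌈n/r⌉`. -/
theorem gordon_bound_t_one {p : ℕ} [Fact p.Prime] (n k d : ℕ) (hkn : k < n)
    (C : Submodule (ZMod p) (Fin n → ZMod p))
    (hk : Module.finrank (ZMod p) C = k)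
    (hd : sInf {m : ℕ | ∃ x ∈ C, ∃ y ∈ C, x ≠ y ∧ hammingDist x y = m} = d)
    (ht : (d - 1) / 2 = 1)
    (I : Finset (Fin n)) (hI : I.card = k)
    (hinfo : ∀ y : Fin n → ZMod p, ∃ x ∈ C, ∀ i ∈ I, x i = y i)
    (S : Finset (Equiv.Perm (Fin n)))
    (hAut : ∀ σ ∈ S, ∀ x ∈ C, (fun i => x (σ i)) ∈ C)
    (hPD : ∀ T : Finset (Fin n), T.card = 1 → ∃ σ ∈ S, ∀ i ∈ T, σ i ∉ I) :
    ⌈(n : ℚ) / ((n - k : ℕ) : ℚ)⌉ ≤ (S.card : ℤ) := by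
  have hr : 0 < n - k := Nat.sub_pos_of_lt hkn
  -- main counting inequality : n ≤ S.card * (n - k)
  have hcover : (Finset.univ : Finset (Fin n)) ⊆
      S.biUnion (fun σ => Finset.univ.filter (fun i => σ i ∉ I)) := by
    intro i _
    obtain ⟨σ, hσS, hσ⟩ := hPD {i} (Finset.card_singleton i)
    exact Finset.mem_biUnion.mpr ⟨σ, hσS,
      Finset.mem_filter.mpr ⟨Finset.mem_univ i, hσ i (Finset.mem_singleton_self i)⟩⟩
  have hcardfil : ∀ σ : Equiv.Perm (Fin n),
      (Finset.univ.filter (fun i => σ i ∉ I)).card = n - k := by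
    intro σ
    have himg : (Finset.univ.filter (fun i => σ i ∉ I)).image σ = Iᶜ := by
      ext j
      simp only [Finset.mem_image, Finset.mem_filter, Finset.mem_univ, true_and,
        Finset.mem_compl]
      constructor
      · rintro ⟨a, ha, rfl⟩; exact ha
      · intro hj; exact ⟨σ.symm j, by simpa using hj, by simp⟩
    have := Finset.card_image_of_injective
      (Finset.univ.filter (fun i => σ i ∉ I)) σ.injective
    rw [himg, Finset.card_compl, hI] at this
    simpa [Fintype.card_fin] using this.symm
  have hmain : n ≤ S.card * (n - k) := by
    calc n = (Finset.univ : Finset (Fin n)).card := by simp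
    _ ≤ (S.biUnion (fun σ => Finset.univ.filter (fun i => σ i ∉ I))).card :=
        Finset.card_le_card hcover
    _ ≤ ∑ σ ∈ S, (Finset.univ.filter (fun i => σ i ∉ I)).card :=
        Finset.card_biUnion_le
    _ = S.card * (n - k) := by simp [hcardfil, Finset.sum_const, mul_comm]
  rw [Int.ceil_le]
  rw [div_le_iff₀ (by exact_mod_cast hr)]
  push_cast
  exact_mod_cast (by exact_mod_cast hmain : (n : ℚ) ≤ S.card * (n - k : ℕ))
end

section
/- (Gordon bound, case t = 2) If S is a PD-set for an [n,k,d] code C that can correct t = 2 errors, and r = n − k, then |S| ≥ ⌈(n/r)·⌈(n−1)/(r−1)⌉⌉. -/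
/-- Gordon bound, case `t = 2`: if `S` is a PD-set for an `[n,k,d]` code `C` correcting
`t = 2` errors, and `r = n - k`, then `|S| ≥ ⌈(n/r)·⌈(n-1)/(r-1)⌉⌉`. -/
theorem gordon_bound_t_two {p : ℕ} [Fact p.Prime] (n k d : ℕ) (hkn : k < n)
    (C : Submodule (ZMod p) (Fin n → ZMod p))
    (hk : Module.finrank (ZMod p) C = k)
    (hd : sInf {m : ℕ | ∃ x ∈ C, ∃ y ∈ C, x ≠ y ∧ hammingDist x y = m} = d)
    (ht : (d - 1) / 2 = 2)
    (I : Finset (Fin n)) (hI : I.card = k)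
    (hinfo : ∀ y : Fin n → ZMod p, ∃ x ∈ C, ∀ i ∈ I, x i = y i)
    (S : Finset (Equiv.Perm (Fin n)))
    (hAut : ∀ σ ∈ S, ∀ x ∈ C, (fun i => x (σ i)) ∈ C)
    (hPD : ∀ T : Finset (Fin n), T.card = 2 → ∃ σ ∈ S, ∀ i ∈ T, σ i ∉ I) :
    ⌈(n : ℚ) / ((n - k : ℕ) : ℚ) *
        ((⌈((n : ℚ) - 1) / (((n - k : ℕ) : ℚ) - 1)⌉ : ℤ) : ℚ)⌉ ≤ (S.card : ℤ) := by
  clear hk hd ht hinfo hAut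
  have hn1 : 1 ≤ n := by omega
  have hr1 : 1 ≤ n - k := by omega
  set r : ℕ := n - k with hr
  rcases eq_or_lt_of_le hr1 with h1 | hr2
  · rw [← h1]
    norm_num
  · -- 2 ≤ r
    have hrQ : (0:ℚ) < (r:ℚ) := by positivity
    have hrQ1 : (0:ℚ) < (r:ℚ) - 1 := by
      have : (2:ℚ) ≤ (r:ℚ) := by exact_mod_cast hr2
      linarith
    set b : ℤ := ⌈((n:ℚ) - 1) / ((r:ℚ) - 1)⌉ with hb
    have hIc : Iᶜ.card = r := by
      rw [Finset.card_compl, hI, Fintype.card_fin]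
    -- per σ, the number of i with σ i ∉ I is exactly r
    have hfib : ∀ σ : Equiv.Perm (Fin n),
        (Finset.univ.filter fun i => σ i ∉ I).card = r := by
      intro σ
      rw [← hIc]
      apply Finset.card_bij (fun i _ => σ i)
      · intro a ha
        simpa using (Finset.mem_filter.mp ha).2
      · intro a _ a' _ h
        exact σ.injective h
      · intro j hj
        exact ⟨σ.symm j, by simpa using Finset.mem_compl.mp hj, by simp⟩
    -- per i, covering bound
    have hcover : ∀ i : Fin n,
        (n - 1 : ℕ) ≤ (S.filter fun σ => σ i ∉ I).card * (r - 1) := by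
      intro i
      have hA : ∀ σ ∈ S.filter (fun σ => σ i ∉ I),
          ((Finset.univ.erase i).filter fun j => σ j ∉ I).card ≤ r - 1 := by
        intro σ hσ
        have hσi : σ i ∉ I := (Finset.mem_filter.mp hσ).2
        have himg : ((Finset.univ.erase i).filter fun j => σ j ∉ I).image σ ⊆
            Iᶜ.erase (σ i) := by
          intro x hx
          obtain ⟨j, hj, rfl⟩ := Finset.mem_image.mp hx
          obtain ⟨hj1, hj2⟩ := Finset.mem_filter.mp hj
          have hji : j ≠ i := (Finset.mem_erase.mp hj1).1
          exact Finset.mem_erase.mpr ⟨fun h => hji (σ.injective h),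
            Finset.mem_compl.mpr hj2⟩
        calc ((Finset.univ.erase i).filter fun j => σ j ∉ I).card
            = (((Finset.univ.erase i).filter fun j => σ j ∉ I).image σ).card :=
              (Finset.card_image_of_injective _ σ.injective).symm
          _ ≤ (Iᶜ.erase (σ i)).card := Finset.card_le_card himg
          _ = r - 1 := by
              rw [Finset.card_erase_of_mem (Finset.mem_compl.mpr hσi), hIc]
      have hsub : Finset.univ.erase i ⊆
          (S.filter fun σ => σ i ∉ I).biUnion
            (fun σ => (Finset.univ.erase i).filter fun j => σ j ∉ I) := by
        intro j hj
        have hji : j ≠ i := (Finset.mem_erase.mp hj).1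
        obtain ⟨σ, hσS, hσ⟩ := hPD {i, j} (by
          rw [Finset.card_insert_of_notMem (by simp [Ne.symm hji]),
            Finset.card_singleton])
        exact Finset.mem_biUnion.mpr ⟨σ,
          Finset.mem_filter.mpr ⟨hσS, hσ i (by simp)⟩,
          Finset.mem_filter.mpr ⟨hj, hσ j (by simp)⟩⟩
      calc n - 1 = (Finset.univ.erase i).card := by
            rw [Finset.card_erase_of_mem (Finset.mem_univ _), Finset.card_univ,
              Fintype.card_fin]
        _ ≤ ((S.filter fun σ => σ i ∉ I).biUnion
              (fun σ => (Finset.univ.erase i).filter fun j => σ j ∉ I)).card :=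
            Finset.card_le_card hsub
        _ ≤ ∑ σ ∈ S.filter (fun σ => σ i ∉ I),
              ((Finset.univ.erase i).filter fun j => σ j ∉ I).card :=
            Finset.card_biUnion_le
        _ ≤ ∑ _σ ∈ S.filter (fun σ => σ i ∉ I), (r - 1) :=
            Finset.sum_le_sum hA
        _ = (S.filter fun σ => σ i ∉ I).card * (r - 1) := by
            rw [Finset.sum_const, smul_eq_mul]
    -- per i, b ≤ card of the filter
    have hbF : ∀ i : Fin n, b ≤ ((S.filter fun σ => σ i ∉ I).card : ℤ) := by
      intro i
      rw [hb, Int.ceil_le]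
      rw [div_le_iff₀ hrQ1]
      have h := hcover i
      have h' : ((n - 1 : ℕ) : ℚ) ≤
          (((S.filter fun σ => σ i ∉ I).card * (r - 1) : ℕ) : ℚ) :=
        Nat.cast_le.mpr h
      push_cast [Nat.cast_sub hn1, Nat.cast_sub hr1] at h'
      push_cast
      linarith
    -- double counting
    have hsumnat : ∑ i : Fin n, (S.filter fun σ => σ i ∉ I).card = S.card * r := by
      simp only [Finset.card_filter]
      rw [Finset.sum_comm]
      have : ∀ σ ∈ S, (∑ i : Fin n, if σ i ∉ I then 1 else 0) = r := by
        intro σ _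
        rw [← Finset.card_filter]
        exact hfib σ
      rw [Finset.sum_congr rfl this, Finset.sum_const, smul_eq_mul]
    have hsum : (n : ℤ) * b ≤ (S.card : ℤ) * (r : ℤ) := by
      calc (n : ℤ) * b = ∑ _i : Fin n, b := by
            simp [Finset.sum_const, mul_comm]
        _ ≤ ∑ i : Fin n, ((S.filter fun σ => σ i ∉ I).card : ℤ) :=
            Finset.sum_le_sum fun i _ => hbF i
        _ = ((∑ i : Fin n, (S.filter fun σ => σ i ∉ I).card : ℕ) : ℤ) := by
            push_cast; rfl
        _ = ((S.card * r : ℕ) : ℤ) := by rw [hsumnat]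
        _ = (S.card : ℤ) * (r : ℤ) := by push_cast; ring
    rw [Int.ceil_le, div_mul_eq_mul_div, div_le_iff₀ hrQ]
    have : ((n : ℤ) * b : ℚ) ≤ ((S.card : ℤ) * (r : ℤ) : ℚ) := by
      exact_mod_cast hsum
    push_cast at this ⊢
    linarith
end
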